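/- arXiv:1207.1708 — 7 statements merged into one kernel-verified Lean document; each statement's English description precedes it below -/
import Mathlib

section
/- For every d ≥ 1, every k with 1 ≤ k ≤ d, and every α ∈ (0,1), the coefficient a^G_{dk}(α) = (1/k!) ∑_{j=1}^k binom(k,j) (−1)^{d−j} (αj)_d of the Gumbel polynomial is strictly positive, where (x)_d = x(x−1)⋯(x−d+1) denotes the falling factorial with d factors. -/
open Finset Polynomial
open scoped fwdDiff

private noncomputable def gumF (α : ℝ) (d : ℕ) : ℝ → ℝ := fun x => (descPochhammer ℝ d).eval (α * x)

private noncomputable def gumT (α : ℝ) (d k : ℕ) : ℝ :=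
  ∑ j ∈ Finset.range (k + 1), (-1 : ℝ) ^ j * (Nat.choose k j : ℝ) * gumF α d j

/-- Iterated forward difference of a polynomial of degree < k vanishes. -/
private lemma fwdDiff_iter_poly (k : ℕ) :
    ∀ p : Polynomial ℝ, p.degree < (k : ℕ) → (fwdDiff (1:ℝ))^[k] (fun x => p.eval x) = 0 := by
  induction k with
  | zero =>
    intro p hp
    have hp0 : p = 0 := by
      rw [Nat.cast_zero] at hp
      rwa [← Polynomial.degree_eq_bot, ← Nat.WithBot.lt_zero_iff]
    subst hp0
    funext x; simp
  | succ k ih =>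
    intro p hp
    have hΔ : (fwdDiff (1:ℝ)) (fun x => p.eval x) = fun x => (p.comp (X + 1) - p).eval x := by
      funext x
      simp [fwdDiff, Polynomial.eval_comp]
    rw [Function.iterate_succ_apply, hΔ, ih]
    by_cases h0 : p.natDegree = 0
    · obtain ⟨a, rfl⟩ := Polynomial.natDegree_eq_zero.mp h0
      simp only [Polynomial.C_comp, sub_self, Polynomial.degree_zero]
      exact WithBot.bot_lt_coe k
    · have hp0 : p ≠ 0 := fun h => h0 (by simp [h])
      have hX1 : (X + 1 : ℝ[X]) = X + C 1 := by simp
      have hnd : (p.comp (X + 1)).natDegree = p.natDegree := by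
        rw [Polynomial.natDegree_comp, hX1, Polynomial.natDegree_X_add_C, mul_one]
      have hc0 : p.comp (X + 1) ≠ 0 := by
        rw [hX1]; exact Polynomial.comp_X_add_C_ne_zero_iff.mpr hp0
      have hdeg : (p.comp (X + 1)).degree = p.degree := by
        rw [Polynomial.degree_eq_natDegree hc0, Polynomial.degree_eq_natDegree hp0, hnd]
      have hlc : (p.comp (X + 1)).leadingCoeff = p.leadingCoeff := by
        rw [hX1, Polynomial.leadingCoeff_comp (by rw [Polynomial.natDegree_X_add_C]; exact one_ne_zero),
          (Polynomial.monic_X_add_C (1:ℝ)).leadingCoeff, one_pow, mul_one]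
      have hsub : (p.comp (X + 1) - p).degree < p.degree :=
        hdeg ▸ Polynomial.degree_sub_lt hdeg hc0 hlc
      have hple : p.degree ≤ (k : ℕ) := by
        have : p.natDegree < k + 1 := by
          rw [Polynomial.natDegree_lt_iff_degree_lt hp0]
          exact_mod_cast hp
        calc p.degree ≤ (p.natDegree : WithBot ℕ) := Polynomial.degree_le_natDegree
          _ ≤ (k : WithBot ℕ) := by exact_mod_cast Nat.lt_succ_iff.mp this
      exact lt_of_lt_of_le hsub hple

private lemma gumT_eq (α : ℝ) (d k : ℕ) :
    (fwdDiff (1:ℝ))^[k] (gumF α d) 0 = (-1 : ℝ) ^ k * gumT α d k := by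
  rw [fwdDiff_iter_eq_sum_shift, gumT, Finset.mul_sum]
  refine Finset.sum_congr rfl fun j hj => ?_
  have hjk : j ≤ k := Nat.lt_succ_iff.mp (Finset.mem_range.mp hj)
  have hsm : (0 : ℝ) + j • (1 : ℝ) = (j : ℝ) := by simp
  rw [hsm]
  have hsign : ((-1 : ℝ) ^ (k - j)) = (-1 : ℝ) ^ k * (-1 : ℝ) ^ j := by
    have h2 : k + j = (k - j) + 2 * j := by omega
    rw [← pow_add, h2, pow_add, pow_mul, neg_one_sq, one_pow, mul_one]
  push_cast [zsmul_eq_mul]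
  rw [hsign]
  ring

private lemma gumT_vanish (α : ℝ) (d k : ℕ) (h : d < k) : gumT α d k = 0 := by
  have hF : gumF α d = fun x => ((descPochhammer ℝ d).comp (C α * X)).eval x := by
    funext x; simp [gumF, Polynomial.eval_comp]
  have hdeg : ((descPochhammer ℝ d).comp (C α * X)).degree < (k : ℕ) := by
    have h1 : ((descPochhammer ℝ d).comp (C α * X)).natDegree ≤ d := by
      calc ((descPochhammer ℝ d).comp (C α * X)).natDegree
          ≤ (descPochhammer ℝ d).natDegree * (C α * X).natDegree :=
            Polynomial.natDegree_comp_le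
        _ ≤ d * 1 := Nat.mul_le_mul (le_of_eq (descPochhammer_natDegree (R := ℝ) d))
            (Polynomial.natDegree_C_mul_le α X |>.trans (le_of_eq Polynomial.natDegree_X))
        _ = d := mul_one d
    calc ((descPochhammer ℝ d).comp (C α * X)).degree
        ≤ (((descPochhammer ℝ d).comp (C α * X)).natDegree : WithBot ℕ) :=
          Polynomial.degree_le_natDegree
      _ < (k : WithBot ℕ) := by exact_mod_cast lt_of_le_of_lt h1 h
  have h0 : (fwdDiff (1:ℝ))^[k] (gumF α d) = 0 := by
    rw [hF]; exact fwdDiff_iter_poly k _ hdeg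
  have := gumT_eq α d k
  rw [h0] at this
  simp only [Pi.zero_apply] at this
  have hne : ((-1 : ℝ) ^ k) ≠ 0 := by positivity
  rcases mul_eq_zero.mp this.symm with h | h
  · exact absurd h hne
  · exact h

private lemma gumT_rec (α : ℝ) (d k : ℕ) :
    gumT α (d + 1) (k + 1) =
      (α * (k + 1) - d) * gumT α d (k + 1) - α * (k + 1) * gumT α d k := by
  have hext : gumT α d k = ∑ j ∈ Finset.range (k + 2),
      (-1 : ℝ) ^ j * (Nat.choose k j : ℝ) * gumF α d j := by
    rw [Finset.sum_range_succ, Nat.choose_succ_self]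
    simp [gumT]
  rw [gumT, gumT, hext, Finset.mul_sum, Finset.mul_sum, ← Finset.sum_sub_distrib]
  refine Finset.sum_congr rfl fun j hj => ?_
  have hjk : j ≤ k + 1 := Nat.lt_succ_iff.mp (Finset.mem_range.mp hj)
  have hFs : gumF α (d + 1) j = gumF α d j * (α * j - d) := by
    simp only [gumF]
    rw [descPochhammer_succ_eval]
  have key : ((k : ℝ) + 1) * (Nat.choose k j : ℝ) =
      (Nat.choose (k + 1) j : ℝ) * (((k : ℝ) + 1) - j) := by
    have h := Nat.choose_mul_succ_eq k j
    have hcast := congrArg (fun n : ℕ => (n : ℝ)) h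
    push_cast [Nat.cast_sub hjk] at hcast
    linarith
  rw [hFs]
  linear_combination ((-1 : ℝ) ^ j * gumF α d j * α) * key

private lemma gumF_zero (α : ℝ) (d : ℕ) (hd : 1 ≤ d) : gumF α d 0 = 0 := by
  simp [gumF, descPochhammer_eval_zero, Nat.one_le_iff_ne_zero.mp hd]

private lemma gumT_zero (α : ℝ) (d : ℕ) (hd : 1 ≤ d) : gumT α d 0 = 0 := by
  simp [gumT, gumF_zero α d hd]

private lemma gumQ_pos (α : ℝ) (hα0 : 0 < α) (hα1 : α < 1) :
    ∀ d, 1 ≤ d → ∀ k, 1 ≤ k → k ≤ d → 0 < (-1 : ℝ) ^ d * gumT α d k := by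
  intro d
  induction d with
  | zero => omega
  | succ d ih =>
    intro _ k hk1 hkd
    rcases Nat.eq_or_lt_of_le hk1 with h1 | h1
    case succ.inl =>
      -- could be d = 0 (base case k = 1, d+1 = 1) or general k = 1
      subst h1
      by_cases hd0 : d = 0
      · subst hd0
        have : gumT α 1 1 = -α := by
          simp [gumT, gumF, Finset.sum_range_succ, descPochhammer_one]
        rw [this]; simpa using hα0
      · have hd1 : 1 ≤ d := Nat.one_le_iff_ne_zero.mpr hd0
        have hrec := gumT_rec α d 0
        rw [gumT_zero α d hd1] at hrec
        have hQ := ih hd1 1 le_rfl hd1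
        have : (-1 : ℝ) ^ (d + 1) * gumT α (d + 1) 1
            = ((d : ℝ) - α * 1) * ((-1 : ℝ) ^ d * gumT α d 1) := by
          rw [hrec]; push_cast; ring
        rw [this]
        apply mul_pos _ hQ
        have : α * 1 < (d : ℝ) := by
          have : (1 : ℝ) ≤ (d : ℝ) := by exact_mod_cast hd1
          nlinarith
        linarith
    case succ.inr =>
      -- k ≥ 2, so k = m + 1 with m ≥ 1; also d ≥ 1
      obtain ⟨m, rfl⟩ : ∃ m, k = m + 1 := ⟨k - 1, by omega⟩
      have hm1 : 1 ≤ m := by omega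
      have hd1 : 1 ≤ d := by omega
      have hrec := gumT_rec α d m
      have hQm := ih hd1 m hm1 (by omega)
      rcases Nat.lt_or_ge (m + 1) (d + 1) with hlt | hge
      · -- k = m+1 ≤ d
        have hkd' : m + 1 ≤ d := by omega
        have hQk := ih hd1 (m + 1) (by omega) hkd'
        have heq : (-1 : ℝ) ^ (d + 1) * gumT α (d + 1) (m + 1)
            = ((d : ℝ) - α * (m + 1)) * ((-1 : ℝ) ^ d * gumT α d (m + 1))
              + α * (m + 1) * ((-1 : ℝ) ^ d * gumT α d m) := by
          rw [hrec]; ring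
        rw [heq]
        have hcoef : 0 < (d : ℝ) - α * (m + 1) := by
          have h1 : α * ((m : ℝ) + 1) < ((m : ℝ) + 1) := by nlinarith [show (0:ℝ) < (m:ℝ) + 1 by positivity]
          have h2 : ((m : ℝ) + 1) ≤ (d : ℝ) := by exact_mod_cast hkd'
          linarith
        have ht2 : 0 < α * ((m : ℝ) + 1) * ((-1 : ℝ) ^ d * gumT α d m) := by
          apply mul_pos _ hQm
          positivity
        nlinarith [mul_pos hcoef hQk]
      · -- k = m+1 = d+1, i.e. m = d
        have hmd : m = d := by omega
        subst hmd
        have hvan : gumT α m (m + 1) = 0 := gumT_vanish α m (m + 1) (by omega)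
        have heq : (-1 : ℝ) ^ (m + 1) * gumT α (m + 1) (m + 1)
            = α * (m + 1) * ((-1 : ℝ) ^ m * gumT α m m) := by
          rw [hrec, hvan]; ring
        rw [heq]
        apply mul_pos _ hQm
        positivity

/-- The Gumbel polynomial coefficients
`a^G_{dk}(α) = (1/k!) ∑_{j=1}^k C(k,j) (−1)^{d−j} (αj)_d` are strictly positive
for `1 ≤ k ≤ d` and `α ∈ (0,1)`. -/
theorem stmt_2 (d : ℕ) (hd : 1 ≤ d) (k : ℕ) (hk1 : 1 ≤ k) (hkd : k ≤ d)
    (α : ℝ) (hα : α ∈ Set.Ioo (0:ℝ) 1) :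
    0 < (1 / (Nat.factorial k : ℝ)) *
      ∑ j ∈ Finset.Icc 1 k, (Nat.choose k j : ℝ) * (-1 : ℝ) ^ (d - j) *
        (descPochhammer ℝ d).eval (α * j) := by
  obtain ⟨hα0, hα1⟩ := hα
  have hS : ∑ j ∈ Finset.Icc 1 k, (Nat.choose k j : ℝ) * (-1 : ℝ) ^ (d - j) *
        (descPochhammer ℝ d).eval (α * j)
      = (-1 : ℝ) ^ d * gumT α d k := by
    rw [gumT, Finset.mul_sum]
    rw [Finset.range_eq_Ico, Finset.sum_eq_sum_Ico_succ_bot (by omega)]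
    rw [show (0 : ℕ) + 1 = 1 from rfl, Finset.Ico_add_one_right_eq_Icc]
    simp only [Nat.cast_zero]
    rw [gumF_zero α d hd]
    simp only [mul_zero, zero_add]
    refine Finset.sum_congr rfl fun j hj => ?_
    obtain ⟨hj1, hjk⟩ := Finset.mem_Icc.mp hj
    have hjd : j ≤ d := le_trans hjk hkd
    have hsign : (-1 : ℝ) ^ (d - j) = (-1 : ℝ) ^ d * (-1 : ℝ) ^ j := by
      have h2 : d + j = (d - j) + 2 * j := by omega
      rw [← pow_add, h2, pow_add, pow_mul, neg_one_sq, one_pow, mul_one]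
    rw [hsign]
    simp only [gumF]
    ring
  rw [hS]
  have hfac : (0 : ℝ) < (Nat.factorial k : ℝ) := by exact_mod_cast Nat.factorial_pos k
  have := gumQ_pos α hα0 hα1 d hd k hk1 hkd
  positivity
end

section
/- Let s and S be the Stirling numbers of the first and second kind, defined by the recurrences s(n+1,k) = s(n,k−1) − n·s(n,k) and S(n+1,k) = S(n,k−1) + k·S(n,k) for all k ≥ 1, n ≥ 0, with s(0,0) = S(0,0) = 1 and s(n,0) = s(0,n) = S(n,0) = S(0,n) = 0 for all n ≥ 1. Then for every real α, every d ≥ 1, and every k with 1 ≤ k ≤ d, (−1)^{d−k} ∑_{j=k}^d α^j s(d,j) S(j,k) = (1/k!) ∑_{j=1}^k binom(k,j) (−1)^{d−j} (αj)_d, where (x)_d = x(x−1)⋯(x−d+1) denotes the falling factorial with d factors. -/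
/-- Signed Stirling numbers of the first kind. -/
def stirling1 : ℕ → ℕ → ℤ
  | 0, 0 => 1
  | 0, _ + 1 => 0
  | _ + 1, 0 => 0
  | n + 1, k + 1 => stirling1 n k - n * stirling1 n (k + 1)

/-- Stirling numbers of the second kind. -/
def stirling2 : ℕ → ℕ → ℤ
  | 0, 0 => 1
  | 0, _ + 1 => 0
  | _ + 1, 0 => 0
  | n + 1, k + 1 => stirling2 n k + (k + 1) * stirling2 n (k + 1)

lemma stirling1_zero_right : ∀ n, 1 ≤ n → stirling1 n 0 = 0
  | _+1, _ => rfl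

lemma stirling1_eq_zero : ∀ n k : ℕ, n < k → stirling1 n k = 0
  | 0, _+1, _ => rfl
  | n+1, k+1, h => by
      rw [stirling1, stirling1_eq_zero n k (by omega), stirling1_eq_zero n (k+1) (by omega)]
      ring

lemma stirling2_eq_zero : ∀ n k : ℕ, n < k → stirling2 n k = 0
  | 0, _+1, _ => rfl
  | n+1, k+1, h => by
      rw [stirling2, stirling2_eq_zero n k (by omega), stirling2_eq_zero n (k+1) (by omega)]
      ring

lemma descPochhammer_eval_eq (d : ℕ) (x : ℝ) :
    (descPochhammer ℝ d).eval x = ∑ i ∈ Finset.range (d+1), (stirling1 d i : ℝ) * x ^ i := by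
  induction d with
  | zero => simp [stirling1]
  | succ d ih =>
      rw [descPochhammer_succ_eval, ih]
      have h1 : ∑ i ∈ Finset.range (d+2), (stirling1 (d+1) i : ℝ) * x ^ i
          = ∑ i ∈ Finset.range (d+1), (stirling1 (d+1) (i+1) : ℝ) * x ^ (i+1) := by
        rw [Finset.sum_range_succ' _ (d+1)]
        simp [stirling1_zero_right (d+1) (by omega)]
      rw [h1]
      have h2 : ∀ i ∈ Finset.range (d+1), (stirling1 (d+1) (i+1) : ℝ) * x ^ (i+1)
          = (stirling1 d i : ℝ) * x ^ (i+1) - (d:ℝ) * ((stirling1 d (i+1) : ℝ) * x ^ (i+1)) := by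
        intro i _; rw [stirling1]; push_cast; ring
      rw [Finset.sum_congr rfl h2, Finset.sum_sub_distrib, ← Finset.mul_sum]
      have h3 : ∑ i ∈ Finset.range (d+1), (stirling1 d (i+1) : ℝ) * x ^ (i+1)
          = ∑ i ∈ Finset.range (d+1), (stirling1 d i : ℝ) * x ^ i - stirling1 d 0 := by
        rw [Finset.sum_range_succ _ d, stirling1_eq_zero d (d+1) (by omega),
          Finset.sum_range_succ' (fun i => (stirling1 d i : ℝ) * x ^ i) d]
        push_cast; ring
      rw [h3]
      have h4 : (d : ℝ) * (stirling1 d 0 : ℝ) = 0 := by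
        rcases Nat.eq_zero_or_pos d with h | h
        · simp [h]
        · rw [stirling1_zero_right d h]; simp
      have h5 : (∑ i ∈ Finset.range (d+1), (stirling1 d i : ℝ) * x ^ i) * (x - d)
          = (∑ i ∈ Finset.range (d+1), (stirling1 d i : ℝ) * x ^ (i+1))
            - (d:ℝ) * ∑ i ∈ Finset.range (d+1), (stirling1 d i : ℝ) * x ^ i := by
        rw [mul_sub, Finset.sum_mul, Finset.mul_sum, Finset.sum_mul]
        congr 1 <;> apply Finset.sum_congr rfl <;> intro i _ <;> ring
      rw [h5, mul_sub, h4]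
      ring

lemma negone_sub (k j : ℕ) (h : j ≤ k) : (-1:ℤ)^(k-j) = (-1)^k * (-1)^j := by
  have h1 : (-1:ℤ)^k = (-1)^(k-j) * (-1)^j := by rw [← pow_add, Nat.sub_add_cancel h]
  rw [h1, mul_assoc, ← pow_add, ← two_mul, pow_mul]
  simp

lemma stirling2_sum : ∀ i k : ℕ,
    (k.factorial : ℤ) * stirling2 i k
      = ∑ j ∈ Finset.range (k+1), (-1:ℤ)^(k-j) * (k.choose j) * (j:ℤ)^i := by
  intro i
  induction i with
  | zero =>
      intro k
      have h1 : ∀ j ∈ Finset.range (k+1), (-1:ℤ)^(k-j) * (k.choose j) * (j:ℤ)^0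
          = (-1)^k * ((-1)^j * (k.choose j)) := by
        intro j hj
        rw [negone_sub k j (by simpa using Nat.lt_succ_iff.mp (Finset.mem_range.mp hj))]
        ring
      rw [Finset.sum_congr rfl h1, ← Finset.mul_sum, Int.alternating_sum_range_choose]
      rcases k with _ | k
      · simp [stirling2]
      · simp [stirling2_eq_zero 0 (k+1) (by omega)]
  | succ i ih =>
      intro k
      rcases k with _ | k
      · simp [stirling2, show stirling2 (i+1) 0 = 0 from rfl]
      · -- peel j = 0
        rw [Finset.sum_range_succ' _ (k+1)]
        simp only [Nat.succ_sub_succ, Nat.cast_zero, ne_eq, Nat.succ_ne_zero,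
          not_false_iff, zero_pow (by omega : i + 1 ≠ 0), mul_zero, add_zero]
        have hB : ∀ j ∈ Finset.range (k+1),
            (-1:ℤ)^(k-j) * ((k+1).choose (j+1)) * ((j:ℤ)+1)^(i+1)
            = (k+1) * ((-1:ℤ)^(k-j) * ((k+1).choose (j+1)) * ((j:ℤ)+1)^i
                - (-1:ℤ)^(k-j) * (k.choose (j+1)) * ((j:ℤ)+1)^i) := by
          intro j hj
          have hc : ((k:ℤ)+1) * (k.choose j) = ((k+1).choose (j+1)) * ((j:ℤ)+1) := by
            exact_mod_cast congrArg (Nat.cast : ℕ → ℤ) (Nat.add_one_mul_choose_eq k j)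
          have hp : ((k+1).choose (j+1) : ℤ) = (k.choose j) + (k.choose (j+1)) := by
            exact_mod_cast congrArg (Nat.cast : ℕ → ℤ) (Nat.choose_succ_succ k j)

          calc (-1:ℤ)^(k-j) * ((k+1).choose (j+1)) * ((j:ℤ)+1)^(i+1)
              = (-1:ℤ)^(k-j) * (((k+1).choose (j+1)) * ((j:ℤ)+1)) * ((j:ℤ)+1)^i := by ring
            _ = (-1:ℤ)^(k-j) * (((k:ℤ)+1) * (k.choose j)) * ((j:ℤ)+1)^i := by rw [← hc]
            _ = (k+1) * ((-1:ℤ)^(k-j) * ((((k+1).choose (j+1) : ℤ)) - (k.choose (j+1))) * ((j:ℤ)+1)^i) := by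
                rw [hp]; ring
            _ = _ := by ring
        push_cast
        rw [Finset.sum_congr rfl hB, ← Finset.mul_sum, Finset.sum_sub_distrib]
        have hA : ∑ x ∈ Finset.range (k+1), (-1:ℤ)^(k-x) * ((k+1).choose (x+1)) * ((x:ℤ)+1)^i
            = (∑ j ∈ Finset.range (k+2), (-1:ℤ)^(k+1-j) * ((k+1).choose j) * (j:ℤ)^i)
              - (-1:ℤ)^(k+1) * (0:ℤ)^i := by
          rw [Finset.sum_range_succ' (fun j => (-1:ℤ)^(k+1-j) * ((k+1).choose j) * (j:ℤ)^i) (k+1)]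
          simp only [Nat.succ_sub_succ, Nat.cast_add, Nat.cast_one, Nat.choose_zero_right,
            Nat.cast_zero, mul_one, Nat.sub_zero]
          ring
        have hB2 : ∑ x ∈ Finset.range (k+1), (-1:ℤ)^(k-x) * (k.choose (x+1)) * ((x:ℤ)+1)^i
            = (∑ j ∈ Finset.range (k+2), (-1:ℤ)^(k+1-j) * (k.choose j) * (j:ℤ)^i)
              - (-1:ℤ)^(k+1) * (0:ℤ)^i := by
          rw [Finset.sum_range_succ' (fun j => (-1:ℤ)^(k+1-j) * (k.choose j) * (j:ℤ)^i) (k+1)]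
          simp only [Nat.succ_sub_succ, Nat.cast_add, Nat.cast_one, Nat.choose_zero_right,
            Nat.cast_zero, mul_one, Nat.sub_zero]
          ring
        have hT : ∑ j ∈ Finset.range (k+2), (-1:ℤ)^(k+1-j) * (k.choose j) * (j:ℤ)^i
            = - ∑ j ∈ Finset.range (k+1), (-1:ℤ)^(k-j) * (k.choose j) * (j:ℤ)^i := by
          rw [Finset.sum_range_succ, Nat.choose_succ_self]
          simp only [Nat.cast_zero, zero_mul, mul_zero, add_zero]
          rw [← Finset.sum_neg_distrib]
          apply Finset.sum_congr rfl
          intro j hj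
          have hjk : j ≤ k := Nat.lt_succ_iff.mp (Finset.mem_range.mp hj)
          rw [show k + 1 - j = (k - j) + 1 by omega, pow_succ]
          ring
        rw [hA, hB2, hT, ← ih (k+1), ← ih k]
        rw [show stirling2 (i+1) (k+1) = stirling2 i k + (k+1) * stirling2 i (k+1) from rfl,
          Nat.factorial_succ]
        push_cast
        ring

lemma stirling2_sum_real (i k : ℕ) :
    (k.factorial : ℝ) * (stirling2 i k : ℝ)
      = ∑ j ∈ Finset.range (k+1), (-1:ℝ)^(k-j) * (k.choose j) * (j:ℝ)^i := by
  exact_mod_cast congrArg (fun z : ℤ => (z : ℝ)) (stirling2_sum i k)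

lemma range_eq_insert_Icc (k : ℕ) (hk : 1 ≤ k) :
    Finset.range (k+1) = insert 0 (Finset.Icc 1 k) := by
  ext x; simp [Finset.mem_range, Finset.mem_Icc]; omega

/-- The two representations of the Gumbel polynomial coefficients agree:
`(−1)^{d−k} ∑_{j=k}^d α^j s(d,j) S(j,k) = (1/k!) ∑_{j=1}^k C(k,j) (−1)^{d−j} (αj)_d`. -/
theorem stmt_3 (α : ℝ) (d : ℕ) (hd : 1 ≤ d) (k : ℕ) (hk1 : 1 ≤ k) (hkd : k ≤ d) :
    (-1 : ℝ) ^ (d - k) *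
      ∑ j ∈ Finset.Icc k d, α ^ j * (stirling1 d j : ℝ) * (stirling2 j k : ℝ)
    = (1 / (Nat.factorial k : ℝ)) *
      ∑ j ∈ Finset.Icc 1 k, (Nat.choose k j : ℝ) * (-1 : ℝ) ^ (d - j) *
        (descPochhammer ℝ d).eval (α * j) := by
  have hfac : (k.factorial : ℝ) ≠ 0 := by
    exact_mod_cast Nat.factorial_ne_zero k
  -- rewrite the RHS inner sum
  have key : ∑ j ∈ Finset.Icc 1 k, (Nat.choose k j : ℝ) * (-1 : ℝ) ^ (d - j) *
        (descPochhammer ℝ d).eval (α * j)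
      = (-1:ℝ)^(d-k) * (k.factorial : ℝ) *
        ∑ j ∈ Finset.Icc k d, α ^ j * (stirling1 d j : ℝ) * (stirling2 j k : ℝ) := by
    have step1 : ∀ j ∈ Finset.Icc 1 k, (Nat.choose k j : ℝ) * (-1 : ℝ) ^ (d - j) *
          (descPochhammer ℝ d).eval (α * j)
        = ∑ i ∈ Finset.range (d+1),
            (-1:ℝ)^(d-k) * ((stirling1 d i : ℝ) * α^i) *
              ((-1:ℝ)^(k-j) * (k.choose j) * (j:ℝ)^i) := by
      intro j hj
      obtain ⟨hj1, hjk⟩ := Finset.mem_Icc.mp hj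
      rw [descPochhammer_eval_eq, Finset.mul_sum]
      apply Finset.sum_congr rfl
      intro i _
      have hsign : (-1:ℝ)^(d-j) = (-1:ℝ)^(d-k) * (-1:ℝ)^(k-j) := by
        rw [← pow_add, show d - k + (k - j) = d - j by omega]
      rw [hsign, mul_pow]
      ring
    rw [Finset.sum_congr rfl step1, Finset.sum_comm]
    have step2 : ∀ i ∈ Finset.range (d+1),
        (∑ j ∈ Finset.Icc 1 k, (-1:ℝ)^(d-k) * ((stirling1 d i : ℝ) * α^i) *
          ((-1:ℝ)^(k-j) * (k.choose j) * (j:ℝ)^i))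
        = (-1:ℝ)^(d-k) * (k.factorial : ℝ) *
            (α^i * (stirling1 d i : ℝ) * (stirling2 i k : ℝ)) := by
      intro i _
      rcases Nat.eq_zero_or_pos i with hi | hi
      · subst hi
        have : stirling1 d 0 = 0 := stirling1_zero_right d hd
        simp [this]
      · rw [← Finset.mul_sum]
        have hIcc : ∑ j ∈ Finset.Icc 1 k, (-1:ℝ)^(k-j) * (k.choose j) * (j:ℝ)^i
            = ∑ j ∈ Finset.range (k+1), (-1:ℝ)^(k-j) * (k.choose j) * (j:ℝ)^i := by
          rw [range_eq_insert_Icc k hk1, Finset.sum_insert (by simp)]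
          rw [Nat.cast_zero, zero_pow (by omega : i ≠ 0)]
          ring
        rw [hIcc, ← stirling2_sum_real]
        ring
    rw [Finset.sum_congr rfl step2, ← Finset.mul_sum]
    congr 1
    -- shrink range (d+1) to Icc k d
    have hsub : Finset.Icc k d ⊆ Finset.range (d+1) := by
      intro x hx
      simp only [Finset.mem_Icc] at hx
      exact Finset.mem_range.mpr (by omega)
    have hzero : ∀ x ∈ Finset.range (d+1), x ∉ Finset.Icc k d →
        α^x * (stirling1 d x : ℝ) * (stirling2 x k : ℝ) = 0 := by
      intro x hx hnx
      simp only [Finset.mem_range] at hx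
      simp only [Finset.mem_Icc, not_and, not_le] at hnx
      have hxk : x < k := by
        by_contra h
        exact absurd (hnx (by omega)) (by omega)
      rw [stirling2_eq_zero x k hxk]
      simp
    rw [Finset.sum_subset hsub hzero]
  rw [key]
  field_simp
end

section
/- For every d ≥ 1, every real α, and every real x, the Gumbel polynomial satisfies ∑_{k=1}^d [ (1/k!) ∑_{j=1}^k binom(k,j) (−1)^{d−j} (αj)_d ] x^k = ∑_{j=1}^d (αj)_d (−1)^{d−j} (x^j / j!) ∑_{k=0}^{d−j} x^k / k!, where (x)_d = x(x−1)⋯(x−d+1) denotes the falling factorial with d factors. (This is the 'Poisson' representation of P^G_{d,α}, since ∑_{k=0}^{d−j} x^k e^{−x}/k! is the Poisson(x) distribution function evaluated at d−j.) -/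
/-- The "Poisson" representation of the Gumbel polynomial:
`∑_{k=1}^d [(1/k!) ∑_{j=1}^k C(k,j) (−1)^{d−j} (αj)_d] x^k
 = ∑_{j=1}^d (αj)_d (−1)^{d−j} (x^j/j!) ∑_{k=0}^{d−j} x^k/k!`. -/
theorem stmt_5 (d : ℕ) (hd : 1 ≤ d) (α : ℝ) (x : ℝ) :
    ∑ k ∈ Finset.Icc 1 d,
      ((1 / (Nat.factorial k : ℝ)) *
        ∑ j ∈ Finset.Icc 1 k, (Nat.choose k j : ℝ) * (-1 : ℝ) ^ (d - j) *
          (descPochhammer ℝ d).eval (α * j)) * x ^ k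
    = ∑ j ∈ Finset.Icc 1 d,
        (descPochhammer ℝ d).eval (α * j) * (-1 : ℝ) ^ (d - j) *
          (x ^ j / (Nat.factorial j : ℝ)) *
          ∑ k ∈ Finset.range (d - j + 1), x ^ k / (Nat.factorial k : ℝ) := by
  have key : ∀ k ∈ Finset.Icc 1 d,
      ((1 / (Nat.factorial k : ℝ)) *
        ∑ j ∈ Finset.Icc 1 k, (Nat.choose k j : ℝ) * (-1 : ℝ) ^ (d - j) *
          (descPochhammer ℝ d).eval (α * j)) * x ^ k
      = ∑ j ∈ Finset.Icc 1 k, (descPochhammer ℝ d).eval (α * j) * (-1 : ℝ) ^ (d - j) *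
          ((Nat.choose k j : ℝ) / (Nat.factorial k : ℝ) * x ^ k) := by
    intro k _
    rw [Finset.mul_sum, Finset.sum_mul]
    refine Finset.sum_congr rfl fun j _ => by ring
  rw [Finset.sum_congr rfl key]
  have swap : ∀ (f : ℕ → ℕ → ℝ),
      (∑ k ∈ Finset.Icc 1 d, ∑ j ∈ Finset.Icc 1 k, f j k)
        = ∑ j ∈ Finset.Icc 1 d, ∑ k ∈ Finset.Icc j d, f j k := by
    intro f
    simp only [← Finset.Ico_add_one_right_eq_Icc]
    exact (Finset.sum_Ico_Ico_comm 1 (d + 1) (fun j k => f j k)).symm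
  rw [swap]
  refine Finset.sum_congr rfl fun j hj => ?_
  rw [Finset.mem_Icc] at hj
  rw [← Finset.Ico_add_one_right_eq_Icc, Finset.sum_Ico_eq_sum_range]
  rw [Finset.mul_sum]
  have hdj : d + 1 - j = d - j + 1 := by omega
  rw [hdj]
  refine Finset.sum_congr rfl fun m _ => ?_
  have hfac : (Nat.choose (j + m) j : ℝ) / (Nat.factorial (j + m) : ℝ)
      = 1 / ((Nat.factorial j : ℝ) * (Nat.factorial m : ℝ)) := by
    have h := Nat.choose_mul_factorial_mul_factorial (Nat.le_add_right j m)
    have h' : (j + m).choose j * (j.factorial * (j + m - j).factorial)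
        = (j + m).factorial := by rw [← h]; ring
    rw [Nat.add_sub_cancel_left] at h'
    have hc : ((j + m).choose j : ℝ) * ((j.factorial : ℝ) * (m.factorial : ℝ))
        = ((j + m).factorial : ℝ) := by exact_mod_cast congrArg Nat.cast h'
    have hj0 : (j.factorial : ℝ) ≠ 0 := Nat.cast_ne_zero.mpr j.factorial_ne_zero
    have hm0 : (m.factorial : ℝ) ≠ 0 := Nat.cast_ne_zero.mpr m.factorial_ne_zero
    have hjm0 : ((j + m).factorial : ℝ) ≠ 0 :=
      Nat.cast_ne_zero.mpr (j + m).factorial_ne_zero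
    field_simp
    linarith [hc]
  rw [hfac, pow_add]
  ring
end

section
/- Let θ ≥ 1, set α = 1/θ, and let ψ(t) = exp(−t^α) for t ≥ 0 be the Gumbel generator. Then for every d ≥ 1 and every t > 0, the d-th derivative of ψ satisfies (−1)^d ψ^{(d)}(t) = (exp(−t^α) / t^d) · ∑_{k=1}^d a^G_{dk}(α) t^{αk}, where a^G_{dk}(α) = (1/k!) ∑_{j=1}^k binom(k,j) (−1)^{d−j} (αj)_d and (x)_d = x(x−1)⋯(x−d+1) is the falling factorial with d factors. -/
/-!
By induction on `d`, `ψ^{(d)}(t) = exp(-t^α) ∑_{k ≤ d} b_{dk} t^{αk-d}`: differentiating one term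
of this sum produces the recurrence `b_{d+1,k+1} = -α b_{dk} + (α(k+1) - d) b_{d,k+1}`, which the
explicit coefficients satisfy by `(k+1) C(k,j) = (k+1-j) C(k+1,j)`. The sum stops at `k = d`
because `b_{dk}` is, up to `(-1)^k/k!`, the `k`-th forward difference of the degree-`d`
polynomial `x ↦ (αx)_d`, which vanishes for `k > d`.
-/

open Finset Polynomial Real
open scoped Nat Topology

lemma neg_one_pow_sub_of_le {R : Type*} [Ring R] {m n : ℕ} (h : m ≤ n) :
    (-1 : R) ^ (n - m) = (-1) ^ n * (-1) ^ m := by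
  have hsq : (-1 : R) ^ m * (-1) ^ m = 1 := by
    rw [← pow_add, ← two_mul, pow_mul, neg_one_sq, one_pow]
  rw [← Nat.sub_add_cancel h, pow_add, mul_assoc, hsq, mul_one, Nat.add_sub_cancel]

lemma sum_range_succ_eq_add_sum_Icc {M : Type*} [AddCommMonoid M] (f : ℕ → M) (n : ℕ) :
    ∑ k ∈ range (n + 1), f k = f 0 + ∑ k ∈ Icc 1 n, f k := by
  rw [Nat.range_succ_eq_Icc_zero, ← insert_Icc_add_one_left_eq_Icc n.zero_le,
    sum_insert (by simp), zero_add]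

section

/-- `(-1)^k / k!` times the `k`-th forward difference at `0` of `x ↦ (α x)_d`. For `d ≥ 1` the
paper's coefficient is `a^G_{dk}(α) = (-1)^d * gumbelCoeff α d k`; letting `j` start at `0` makes
the `d = 0` case (`ψ` itself) fit the same formula. -/
noncomputable def gumbelCoeff (α : ℝ) (d k : ℕ) : ℝ :=
  (k ! : ℝ)⁻¹ * ∑ j ∈ range (k + 1), (-1) ^ j * k.choose j * (descPochhammer ℝ d).eval (α * j)

variable (α : ℝ)

lemma gumbelCoeff_zero_right (d : ℕ) : gumbelCoeff α d 0 = if d = 0 then 1 else 0 := by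
  simp [gumbelCoeff, descPochhammer_eval_zero]

lemma gumbelCoeff_eq_zero_of_lt {d k : ℕ} (h : d < k) : gumbelCoeff α d k = 0 := by
  set P : ℝ[X] := (descPochhammer ℝ d).comp (C α * X)
  have hP : P.natDegree < k := by
    calc P.natDegree ≤ (descPochhammer ℝ d).natDegree * (C α * X).natDegree := natDegree_comp_le
      _ ≤ d * 1 := by
        gcongr
        · exact (descPochhammer_natDegree ℝ d).le
        · exact (natDegree_C_mul_le α X).trans natDegree_X_le
      _ < k := by omega
  have hΔ := congr_fun (fwdDiff_iter_eq_zero_of_degree_lt hP) 0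
  simp only [fwdDiff_iter_eq_sum_shift, Pi.zero_apply, zero_add, nsmul_eq_mul, mul_one,
    zsmul_eq_mul, Int.cast_mul, Int.cast_pow, Int.cast_neg, Int.cast_one, Int.cast_natCast] at hΔ
  refine mul_eq_zero_of_right _ ?_
  calc _ = (-1) ^ k * ∑ j ∈ range (k + 1), (-1) ^ (k - j) * k.choose j * P.eval (j : ℝ) := by
        rw [mul_sum]
        refine sum_congr rfl fun j hj => ?_
        rw [neg_one_pow_sub_of_le (Nat.lt_succ_iff.mp (mem_range.mp hj)), eval_comp]
        have hsq : (-1 : ℝ) ^ k * (-1) ^ k = 1 := by rw [← mul_pow]; norm_num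
        simp only [eval_mul, eval_C, eval_X]
        linear_combination (-(-1) ^ j * k.choose j * (descPochhammer ℝ d).eval (α * j)) * hsq
    _ = 0 := by rw [hΔ, mul_zero]

lemma gumbelCoeff_succ_succ (d k : ℕ) :
    gumbelCoeff α (d + 1) (k + 1)
      = -α * gumbelCoeff α d k + (α * (k + 1) - d) * gumbelCoeff α d (k + 1) := by
  have hext : ∑ j ∈ range (k + 1), (-1) ^ j * k.choose j * (descPochhammer ℝ d).eval (α * j)
      = ∑ j ∈ range (k + 1 + 1), (-1) ^ j * k.choose j * (descPochhammer ℝ d).eval (α * j) := by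
    simp [sum_range_succ _ (k + 1)]
  have hchoose : ∀ j ∈ range (k + 1 + 1),
      ((k + 1).choose j : ℝ) * j = (k + 1) * ((k + 1).choose j - k.choose j) := by
    intro j hj
    have := Nat.choose_mul_succ_eq k j
    rw [← Nat.cast_inj (R := ℝ)] at this
    push_cast [Nat.cast_sub (Nat.lt_succ_iff.mp (mem_range.mp hj))] at this
    linear_combination this
  simp only [gumbelCoeff, descPochhammer_succ_eval]
  rw [hext, Nat.factorial_succ]
  push_cast
  field_simp
  simp only [mul_sum, ← sum_neg_distrib, ← sum_add_distrib]
  refine sum_congr rfl fun j hj => ?_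
  linear_combination (-1) ^ j * (descPochhammer ℝ d).eval (α * j) * α * hchoose j hj

lemma sum_gumbelCoeff_succ_mul (d : ℕ) (E : ℕ → ℝ) :
    ∑ k ∈ range (d + 2), gumbelCoeff α (d + 1) k * E k
      = ∑ k ∈ range (d + 1), gumbelCoeff α d k * ((α * k - d) * E k - α * E (k + 1)) := by
  set B : ℕ → ℝ := fun k => (α * k - d) * gumbelCoeff α d k * E k
  have hB : ∑ k ∈ range (d + 1), B (k + 1) = ∑ k ∈ range (d + 1), B k := by
    have hB₀ : B 0 = 0 := by
      simp only [B, gumbelCoeff_zero_right]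
      split_ifs with hd <;> simp [hd]
    have hBtop : B (d + 1) = 0 := by simp [B, gumbelCoeff_eq_zero_of_lt]
    have h := (sum_range_succ' B (d + 1)).symm.trans (sum_range_succ B (d + 1))
    rwa [hB₀, hBtop, add_zero, add_zero] at h
  calc _ = ∑ k ∈ range (d + 1), (-α * gumbelCoeff α d k * E (k + 1) + B (k + 1)) := by
        rw [sum_range_succ', gumbelCoeff_zero_right, if_neg d.succ_ne_zero, zero_mul, add_zero]
        refine sum_congr rfl fun k _ => ?_
        rw [gumbelCoeff_succ_succ]
        simp only [B]
        push_cast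
        ring
    _ = ∑ k ∈ range (d + 1), (-α * gumbelCoeff α d k * E (k + 1) + B k) := by
        rw [sum_add_distrib, hB, sum_add_distrib]
    _ = _ := sum_congr rfl fun k _ => by ring

lemma hasDerivAt_exp_neg_rpow_mul_rpow (β : ℝ) {t : ℝ} (ht : 0 < t) :
    HasDerivAt (fun s => exp (-s ^ α) * s ^ β)
      (exp (-t ^ α) * (β * t ^ (β - 1) - α * t ^ (α + β - 1))) t := by
  have h := ((hasDerivAt_rpow_const (p := α) (Or.inl ht.ne')).fun_neg.exp).fun_mul
    (hasDerivAt_rpow_const (p := β) (Or.inl ht.ne'))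
  refine h.congr_deriv ?_
  rw [show α + β - 1 = (α - 1) + β by ring, rpow_add ht]
  ring

theorem iteratedDeriv_exp_neg_rpow (d : ℕ) {t : ℝ} (ht : 0 < t) :
    iteratedDeriv d (fun s => exp (-s ^ α)) t
      = ∑ k ∈ range (d + 1), gumbelCoeff α d k * (exp (-t ^ α) * t ^ (α * k - d)) := by
  induction d generalizing t with
  | zero => simp [gumbelCoeff_zero_right]
  | succ d ih =>
    have hev : iteratedDeriv d (fun s => exp (-s ^ α)) =ᶠ[𝓝 t]
        fun s => ∑ k ∈ range (d + 1), gumbelCoeff α d k * (exp (-s ^ α) * s ^ (α * k - d)) :=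
      Filter.eventuallyEq_of_mem (Ioi_mem_nhds ht) fun s hs => ih hs
    have hderiv := HasDerivAt.fun_sum fun k (_ : k ∈ range (d + 1)) =>
      (hasDerivAt_exp_neg_rpow_mul_rpow α (α * k - d) ht).const_mul (gumbelCoeff α d k)
    rw [iteratedDeriv_succ, hev.deriv_eq, hderiv.deriv,
      sum_gumbelCoeff_succ_mul α d fun k => exp (-t ^ α) * t ^ (α * k - (d + 1 : ℕ))]
    refine sum_congr rfl fun k _ => ?_
    rw [show α * k - d - 1 = α * k - ((d + 1 : ℕ) : ℝ) by push_cast; ring,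
      show α + (α * k - d) - 1 = α * ((k + 1 : ℕ) : ℝ) - ((d + 1 : ℕ) : ℝ) by push_cast; ring]
    ring

lemma neg_one_pow_mul_gumbelCoeff {d k : ℕ} (hd : d ≠ 0) (hk : k ≤ d) :
    (-1) ^ d * gumbelCoeff α d k
      = 1 / (k ! : ℝ) * ∑ j ∈ Icc 1 k,
          (k.choose j : ℝ) * (-1) ^ (d - j) * (descPochhammer ℝ d).eval (α * j) := by
  rw [gumbelCoeff, sum_range_succ_eq_add_sum_Icc]
  simp only [Nat.cast_zero, mul_zero, descPochhammer_eval_zero, if_neg hd, zero_add, mul_sum]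
  refine sum_congr rfl fun j hj => ?_
  rw [neg_one_pow_sub_of_le ((mem_Icc.mp hj).2.trans hk)]
  ring

end

theorem stmt_10_general (θ : ℝ) (d : ℕ) (hd : 1 ≤ d) (t : ℝ) (ht : 0 < t) :
    (-1 : ℝ) ^ d * iteratedDeriv d (fun s => Real.exp (-(s ^ (1/θ)))) t
    = Real.exp (-(t ^ (1/θ))) / t ^ d *
        ∑ k ∈ Finset.Icc 1 d,
          ((1 / (Nat.factorial k : ℝ)) *
            ∑ j ∈ Finset.Icc 1 k, (Nat.choose k j : ℝ) * (-1 : ℝ) ^ (d - j) *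
              (descPochhammer ℝ d).eval ((1/θ) * j)) * t ^ ((1/θ) * k) := by
  have hd₀ : d ≠ 0 := by omega
  rw [iteratedDeriv_exp_neg_rpow (1 / θ) d ht, sum_range_succ_eq_add_sum_Icc,
    gumbelCoeff_zero_right, if_neg hd₀, zero_mul, zero_add, mul_sum, mul_sum]
  refine sum_congr rfl fun k hk => ?_
  rw [← neg_one_pow_mul_gumbelCoeff _ hd₀ (mem_Icc.mp hk).2, rpow_sub ht, rpow_natCast]
  ring

/-- Explicit formula for the derivatives of the Gumbel generator
`ψ(t) = exp(−t^α)`, `α = 1/θ`: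
`(−1)^d ψ^{(d)}(t) = (exp(−t^α)/t^d) ∑_{k=1}^d a^G_{dk}(α) t^{αk}` where
`a^G_{dk}(α) = (1/k!) ∑_{j=1}^k C(k,j) (−1)^{d−j} (αj)_d`. -/
theorem stmt_10 (θ : ℝ) (hθ : 1 ≤ θ) (d : ℕ) (hd : 1 ≤ d) (t : ℝ) (ht : 0 < t) :
    (-1 : ℝ) ^ d * iteratedDeriv d (fun s => Real.exp (-(s ^ (1/θ)))) t
    = Real.exp (-(t ^ (1/θ))) / t ^ d *
        ∑ k ∈ Finset.Icc 1 d,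
          ((1 / (Nat.factorial k : ℝ)) *
            ∑ j ∈ Finset.Icc 1 k, (Nat.choose k j : ℝ) * (-1 : ℝ) ^ (d - j) *
              (descPochhammer ℝ d).eval ((1/θ) * j)) * t ^ ((1/θ) * k) :=
  stmt_10_general θ d hd t ht
end

section
/- Let θ ∈ (0,1) and let ψ_θ(t) = (1−θ)/(e^t − θ) for t ≥ 0 be the Ali-Mikhail-Haq generator. Then for every d ≥ 0 and every t > 0, the d-th derivative of ψ_θ satisfies (−1)^d ψ_θ^{(d)}(t) = ((1−θ)/θ) · Li_{−d}(θ e^{−t}), where Li_{−d}(z) = ∑_{k=1}^∞ k^d z^k is the polylogarithm of order −d (the series converging since 0 < θ e^{−t} < 1). -/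
/-!
Expanding the generator as a geometric series in `z = θ e^{-t}`,
`ψ_θ(t) = ((1−θ)/θ) ∑_{k ≥ 1} θᵏ e^{−kt}`, each term is an exponential and differentiating it
multiplies it by `−k`. Term-by-term differentiation is justified on every half-line `t > a > 0`,
where `|θ e^{-t}| ≤ e^{-a} < 1` gives a uniform geometric bound.
-/

open Set Filter Topology

noncomputable def polylogNeg (d : ℕ) (z : ℝ) : ℝ :=
  ∑' k : ℕ, ((k : ℝ) + 1) ^ d * z ^ (k + 1)

lemma summable_polylogNeg (d : ℕ) {z : ℝ} (hz : ‖z‖ < 1) :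
    Summable fun k : ℕ => ((k : ℝ) + 1) ^ d * z ^ (k + 1) := by
  have h := (summable_nat_add_iff 1).2 (summable_pow_mul_geometric_of_norm_lt_one (R := ℝ) d hz)
  exact h.congr fun k => by push_cast; rfl

lemma polylogNeg_zero {z : ℝ} (hz : ‖z‖ < 1) : polylogNeg 0 z = z / (1 - z) := by
  simp only [polylogNeg, pow_zero, one_mul, pow_succ', tsum_mul_left,
    tsum_geometric_of_norm_lt_one hz, div_eq_mul_inv]

lemma norm_mul_exp_neg_le {θ : ℝ} (hθ : |θ| ≤ 1) {a t : ℝ} (ha : a ≤ t) :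
    ‖θ * Real.exp (-t)‖ ≤ Real.exp (-a) := by
  rw [norm_mul, Real.norm_eq_abs, Real.norm_of_nonneg (Real.exp_pos _).le]
  calc |θ| * Real.exp (-t) ≤ 1 * Real.exp (-a) := by gcongr
    _ = Real.exp (-a) := one_mul _

lemma norm_mul_exp_neg_lt_one {θ : ℝ} (hθ : |θ| ≤ 1) {t : ℝ} (ht : 0 < t) :
    ‖θ * Real.exp (-t)‖ < 1 :=
  (norm_mul_exp_neg_le hθ le_rfl).trans_lt (Real.exp_lt_one_iff.2 (neg_lt_zero.2 ht))

lemma hasDerivAt_polylogNeg_mul_exp_neg {θ : ℝ} (hθ : |θ| ≤ 1) (d : ℕ) {t : ℝ} (ht : 0 < t) :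
    HasDerivAt (fun s => polylogNeg d (θ * Real.exp (-s)))
      (-polylogNeg (d + 1) (θ * Real.exp (-t))) t := by
  have hterm (k : ℕ) (s : ℝ) :
      HasDerivAt (fun s => ((k : ℝ) + 1) ^ d * (θ * Real.exp (-s)) ^ (k + 1))
        (-(((k : ℝ) + 1) ^ (d + 1) * (θ * Real.exp (-s)) ^ (k + 1))) s := by
    refine (((((hasDerivAt_neg s).exp).const_mul θ).fun_pow (k + 1)).const_mul _).congr_deriv ?_
    rw [Nat.add_sub_cancel]
    push_cast
    ring
  have hbound (k : ℕ) (s : ℝ) (hs : s ∈ Ioi (t / 2)) :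
      ‖-(((k : ℝ) + 1) ^ (d + 1) * (θ * Real.exp (-s)) ^ (k + 1))‖
        ≤ ((k : ℝ) + 1) ^ (d + 1) * Real.exp (-(t / 2)) ^ (k + 1) := by
    rw [norm_neg, norm_mul, norm_pow, norm_pow, Real.norm_of_nonneg (by positivity)]
    gcongr
    exact norm_mul_exp_neg_le hθ hs.le
  have hdom := summable_polylogNeg (d + 1) (z := Real.exp (-(t / 2))) (by simpa using ht)
  simpa only [polylogNeg, tsum_neg] using
    hasDerivAt_tsum_of_isPreconnected hdom isOpen_Ioi isPreconnected_Ioi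
      (fun k s _ => hterm k s) hbound (half_lt_self ht)
      (summable_polylogNeg d (norm_mul_exp_neg_lt_one hθ ht)) (half_lt_self ht)

lemma eqOn_iteratedDeriv_of_hasDerivAt {𝕜 E : Type*} [NontriviallyNormedField 𝕜]
    [NormedAddCommGroup E] [NormedSpace 𝕜 E] {f : 𝕜 → E} {F : ℕ → 𝕜 → E} {U : Set 𝕜}
    (hU : IsOpen U) (hf : EqOn f (F 0) U) (hF : ∀ n, ∀ x ∈ U, HasDerivAt (F n) (F (n + 1) x) x) :
    ∀ n, EqOn (iteratedDeriv n f) (F n) U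
  | 0, x, hx => by simpa using hf hx
  | n + 1, x, hx => by
    have hnear : iteratedDeriv n f =ᶠ[𝓝 x] F n :=
      eventually_of_mem (hU.mem_nhds hx) fun y hy => eqOn_iteratedDeriv_of_hasDerivAt hU hf hF n hy
    rw [iteratedDeriv_succ, hnear.deriv_eq, (hF n x hx).deriv]

/-- Derivatives of the Ali-Mikhail-Haq generator `ψ_θ(t) = (1−θ)/(eᵗ−θ)`:
`(−1)^d ψ_θ^{(d)}(t) = ((1−θ)/θ) Li_{−d}(θ e^{−t})`, with
`Li_{−d}(z) = ∑_{k=1}^∞ k^d z^k` convergent. -/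
theorem stmt_11 (θ : ℝ) (hθ : θ ∈ Set.Ioo (0:ℝ) 1) (d : ℕ) (t : ℝ) (ht : 0 < t) :
    Summable (fun k : ℕ => ((k : ℝ) + 1) ^ d * (θ * Real.exp (-t)) ^ (k + 1)) ∧
    (-1 : ℝ) ^ d * iteratedDeriv d (fun s => (1 - θ) / (Real.exp s - θ)) t
      = ((1 - θ) / θ) *
          ∑' k : ℕ, ((k : ℝ) + 1) ^ d * (θ * Real.exp (-t)) ^ (k + 1) := by
  obtain ⟨hθ0, hθ1⟩ := hθ
  have habs : |θ| ≤ 1 := by rw [abs_of_pos hθ0]; exact hθ1.le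
  refine ⟨summable_polylogNeg d (norm_mul_exp_neg_lt_one habs ht), ?_⟩
  have hψ : EqOn (fun s => (1 - θ) / (Real.exp s - θ))
      (fun s => (-1) ^ 0 * ((1 - θ) / θ) * polylogNeg 0 (θ * Real.exp (-s))) (Ioi 0) := by
    intro s hs
    have hne : Real.exp s - θ ≠ 0 := by linarith [Real.one_lt_exp_iff.2 hs]
    dsimp only
    rw [polylogNeg_zero (norm_mul_exp_neg_lt_one habs hs), Real.exp_neg]
    field_simp
  have hderiv (n : ℕ) (s : ℝ) (hs : s ∈ Ioi 0) :
      HasDerivAt (fun s => (-1) ^ n * ((1 - θ) / θ) * polylogNeg n (θ * Real.exp (-s)))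
        ((-1) ^ (n + 1) * ((1 - θ) / θ) * polylogNeg (n + 1) (θ * Real.exp (-s))) s := by
    refine ((hasDerivAt_polylogNeg_mul_exp_neg habs n hs).const_mul _).congr_deriv ?_
    ring
  rw [eqOn_iteratedDeriv_of_hasDerivAt isOpen_Ioi hψ hderiv d ht, ← mul_assoc, ← mul_assoc,
    ← mul_pow, neg_one_mul, neg_neg, one_pow, one_mul]
  rfl
end

section
/- Let d ≥ 2, n ≥ 1, and let y_1,…,y_n ∈ (0,1) with S = ∑_{i=1}^n (−log y_i) satisfying 0 < S < n. For θ > 0 define the Gumbel diagonal log-likelihood L(θ) = ∑_{i=1}^n log( d^{1/θ} y_i^{d^{1/θ} − 1} ) = n (log d)/θ − (d^{1/θ} − 1) S. Then L attains its global maximum over θ ∈ (0,∞) at θ̂ = log d / (log n − log S); that is, L(θ) ≤ L(θ̂) for all θ > 0. -/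
/-- The Gumbel diagonal log-likelihood `L(θ) = n (log d)/θ − (d^{1/θ} − 1) S`
attains its global maximum over `θ ∈ (0,∞)` at `θ̂ = log d/(log n − log S)`. -/
theorem stmt_13 (d n : ℕ) (hd : 2 ≤ d) (hn : 1 ≤ n)
    (y : Fin n → ℝ) (hy : ∀ i, y i ∈ Set.Ioo (0:ℝ) 1)
    (S : ℝ) (hS : S = ∑ i, -Real.log (y i)) (hS0 : 0 < S) (hSn : S < n)
    (θ : ℝ) (hθ : 0 < θ) :
    (n : ℝ) * Real.log d / θ - ((d : ℝ) ^ (1/θ) - 1) * S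
      ≤ (n : ℝ) * Real.log d / (Real.log d / (Real.log n - Real.log S))
          - ((d : ℝ) ^ (1 / (Real.log d / (Real.log n - Real.log S))) - 1) * S := by
  have hdR : (2:ℝ) ≤ (d:ℝ) := by exact_mod_cast hd
  have hd0 : (0:ℝ) < d := by linarith
  have hD : 0 < Real.log d := Real.log_pos (by linarith)
  have hn0 : (0:ℝ) < n := by exact_mod_cast hn
  have hc0 : 0 < Real.log n - Real.log S := sub_pos.mpr (Real.log_lt_log hS0 hSn)
  set c := Real.log n - Real.log S with hc
  set x := (d:ℝ) ^ (1/θ) with hx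
  have hx0 : 0 < x := Real.rpow_pos_of_pos hd0 _
  have hlogx : Real.log x = Real.log d / θ := by
    rw [hx, Real.log_rpow hd0]; ring
  have hxhat : (d:ℝ) ^ (1 / (Real.log d / c)) = (n:ℝ) / S := by
    rw [one_div_div, Real.rpow_def_of_pos hd0, mul_comm,
      div_mul_cancel₀ _ hD.ne', hc, Real.exp_sub, Real.exp_log hn0, Real.exp_log hS0]
  have h2 : (n:ℝ) * Real.log d / (Real.log d / c) = n * c := by
    field_simp
  have h3 : ((n:ℝ)/S - 1) * S = n - S := by field_simp
  rw [hxhat, h2, h3]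
  have key : Real.log (x * S / n) ≤ x * S / n - 1 :=
    Real.log_le_sub_one_of_pos (by positivity)
  have hlog2 : Real.log (x * S / n) = Real.log x + Real.log S - Real.log n := by
    rw [Real.log_div (by positivity) hn0.ne', Real.log_mul hx0.ne' hS0.ne']
  have hkey2 : (n:ℝ) * (Real.log x + Real.log S - Real.log n) ≤ n * (x * S / n - 1) := by
    rw [← hlog2]; exact mul_le_mul_of_nonneg_left key hn0.le
  have hfield : (n:ℝ) * (x * S / n - 1) = x * S - n := by field_simp
  rw [mul_div_assoc, ← hlogx, hc]
  nlinarith [hkey2, hfield]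
end

section
/- Let θ ≥ 1 and let ψ(t) = 1 − (1 − e^{−t})^{1/θ} be the Joe generator. Then 1 − 4 ∫_0^∞ t (ψ′(t))^2 dt = 1 − 4 ∑_{k=1}^∞ 1/(k (θk + 2)(θ(k−1) + 2)); that is, Kendall's tau of the Joe copula with parameter θ equals 1 − 4 ∑_{k=1}^∞ 1/(k(θk+2)(θ(k−1)+2)), the series being convergent. -/
open Real MeasureTheory Set

/-!
Substituting `u = 1 - e^{-t}` turns `∫_0^∞ t ψ'(t)^2 dt` into
`θ⁻² ∫_0^1 -log(1 - u) u^{2/θ - 2} (1 - u) du`. Expanding `-log(1 - u) = ∑ u^{k+1}/(k+1)` and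
integrating term by term (legitimate since all terms are nonnegative and the resulting series
converges) leaves the Beta-type integrals `∫_0^1 u^b (1 - u) du = 1/((b+1)(b+2))` with
`b = k + 2/θ - 1`, whose sum is the stated series.
-/

lemma integral_Ioo_zero_one_rpow {b : ℝ} (hb : -1 < b) :
    ∫ u in Ioo (0 : ℝ) 1, u ^ b = 1 / (b + 1) := by
  rw [← integral_Ioc_eq_integral_Ioo, ← intervalIntegral.integral_of_le zero_le_one,
    integral_rpow (Or.inl hb), one_rpow, zero_rpow (by linarith)]
  ring

lemma rpow_mul_one_sub_eqOn (b : ℝ) :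
    EqOn (fun u : ℝ => u ^ b * (1 - u)) (fun u => u ^ b - u ^ (b + 1)) (Ioi 0) := by
  intro u (hu : 0 < u)
  simp only [rpow_add hu, rpow_one]
  ring

lemma integrableOn_rpow_mul_one_sub {b : ℝ} (hb : -1 < b) :
    IntegrableOn (fun u : ℝ => u ^ b * (1 - u)) (Ioo 0 1) := by
  have hint : ∀ {c : ℝ}, -1 < c → IntegrableOn (fun u : ℝ => u ^ c) (Ioo 0 1) :=
    fun hc => (intervalIntegral.integrableOn_Ioo_rpow_iff one_pos).2 hc
  exact ((hint hb).sub (hint (by linarith))).congr_fun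
    ((rpow_mul_one_sub_eqOn b).mono Ioo_subset_Ioi_self).symm measurableSet_Ioo

lemma integral_Ioo_zero_one_rpow_mul_one_sub {b : ℝ} (hb : -1 < b) :
    ∫ u in Ioo (0 : ℝ) 1, u ^ b * (1 - u) = 1 / ((b + 1) * (b + 2)) := by
  have hb1 : -1 < b + 1 := by linarith
  rw [setIntegral_congr_fun measurableSet_Ioo
      ((rpow_mul_one_sub_eqOn b).mono Ioo_subset_Ioi_self),
    integral_sub ((intervalIntegral.integrableOn_Ioo_rpow_iff one_pos).2 hb)
      ((intervalIntegral.integrableOn_Ioo_rpow_iff one_pos).2 hb1),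
    integral_Ioo_zero_one_rpow hb, integral_Ioo_zero_one_rpow hb1, add_assoc, one_add_one_eq_two]
  field_simp [show b + 1 ≠ 0 by linarith, show b + 2 ≠ 0 by linarith]
  ring

lemma summable_one_div_succ_mul_add_two_mul_add_three {s : ℝ} (hs : -2 < s) :
    Summable (fun k : ℕ => 1 / (((k : ℝ) + 1) * (k + s + 2) * (k + s + 3))) := by
  have hbase : Summable (fun k : ℕ => 1 / ((k : ℝ) + 1) ^ 2) := by
    simpa using (summable_nat_add_iff 1).2 (summable_one_div_nat_pow.2 one_lt_two)
  have hpos : ∀ k : ℕ, 0 < ((k : ℝ) + 1) * (k + s + 2) * (k + s + 3) := fun k => by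
    have hk : (0 : ℝ) ≤ k := k.cast_nonneg
    apply mul_pos (mul_pos _ _) _ <;> linarith
  refine Summable.of_nonneg_of_le (fun k => (one_div_pos.2 (hpos k)).le) (fun k => ?_)
    (hbase.mul_left (1 / (s + 2)))
  have hk : (0 : ℝ) ≤ k := k.cast_nonneg
  rw [div_mul_div_comm, one_mul]
  apply one_div_le_one_div_of_le (mul_pos (by linarith) (by positivity))
  nlinarith [mul_nonneg hk (by linarith : (0 : ℝ) ≤ s + 2)]

lemma one_sub_exp_neg_mem_Ioo {t : ℝ} (ht : 0 < t) : 1 - exp (-t) ∈ Ioo 0 1 := by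
  have h1 : exp (-t) < 1 := exp_lt_one_iff.2 (neg_lt_zero.2 ht)
  have h0 : 0 < exp (-t) := exp_pos _
  constructor <;> linarith

lemma hasDerivAt_one_sub_exp_neg (t : ℝ) : HasDerivAt (fun s => 1 - exp (-s)) (exp (-t)) t := by
  simpa using ((hasDerivAt_neg t).exp).const_sub 1

lemma image_one_sub_exp_neg_Ioi : (fun t => 1 - exp (-t)) '' Ioi 0 = Ioo (0 : ℝ) 1 := by
  refine Subset.antisymm (image_subset_iff.2 fun t ht => one_sub_exp_neg_mem_Ioo ht) ?_
  rintro u ⟨hu0, hu1⟩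
  refine ⟨-log (1 - u), neg_pos.2 (log_neg (by linarith) (by linarith)), ?_⟩
  simp only [neg_neg, exp_log (by linarith : 0 < 1 - u), sub_sub_cancel]

lemma integral_Ioo_zero_one_eq_integral_Ioi (g : ℝ → ℝ) :
    ∫ u in Ioo (0 : ℝ) 1, g u = ∫ t in Ioi 0, exp (-t) * g (1 - exp (-t)) := by
  have hmono : StrictMono (fun t : ℝ => 1 - exp (-t)) := fun a b hab => by
    simpa using exp_lt_exp.2 (neg_lt_neg hab)
  rw [← image_one_sub_exp_neg_Ioi, integral_image_eq_integral_abs_deriv_smul measurableSet_Ioi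
    (fun t _ => (hasDerivAt_one_sub_exp_neg t).hasDerivWithinAt) hmono.injective.injOn]
  simp only [abs_of_pos (exp_pos _), smul_eq_mul]

lemma deriv_one_sub_one_sub_exp_neg_rpow (α : ℝ) {t : ℝ} (ht : 0 < t) :
    deriv (fun s => 1 - (1 - exp (-s)) ^ α) t
      = -(α * (1 - exp (-t)) ^ (α - 1) * exp (-t)) := by
  have hx := (one_sub_exp_neg_mem_Ioo ht).1
  rw [(((hasDerivAt_one_sub_exp_neg t).rpow_const (Or.inl hx.ne')).const_sub 1).deriv]
  ring

lemma integral_mul_deriv_one_sub_one_sub_exp_neg_rpow_sq (α : ℝ) :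
    ∫ t in Ioi (0 : ℝ), t * deriv (fun s => 1 - (1 - exp (-s)) ^ α) t ^ 2
      = α ^ 2 * ∫ u in Ioo (0 : ℝ) 1, -log (1 - u) * (u ^ (2 * α - 2) * (1 - u)) := by
  rw [← integral_const_mul, integral_Ioo_zero_one_eq_integral_Ioi]
  refine setIntegral_congr_fun measurableSet_Ioi fun t (ht : 0 < t) => ?_
  have hx := (one_sub_exp_neg_mem_Ioo ht).1
  have hsq : (1 - exp (-t)) ^ (2 * α - 2) = ((1 - exp (-t)) ^ (α - 1)) ^ 2 := by
    rw [← rpow_mul_natCast hx.le]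
    ring_nf
  rw [deriv_one_sub_one_sub_exp_neg_rpow α ht, sub_sub_cancel, log_exp, hsq]
  ring

lemma hasSum_integral_neg_log_one_sub_mul {s : ℝ} (hs : -2 < s) :
    HasSum (fun k : ℕ => 1 / (((k : ℝ) + 1) * (k + s + 2) * (k + s + 3)))
      (∫ u in Ioo (0 : ℝ) 1, -log (1 - u) * (u ^ s * (1 - u))) := by
  set F : ℕ → ℝ → ℝ := fun k u => u ^ (k + 1) / (k + 1) * (u ^ s * (1 - u))
  have hb (k : ℕ) : -1 < (k : ℝ) + 1 + s := by linarith [k.cast_nonneg (α := ℝ)]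
  have hF (k : ℕ) : EqOn (F k) (fun u => u ^ ((k : ℝ) + 1 + s) * (1 - u) / (k + 1)) (Ioo 0 1) :=
    fun u hu => by
      have hpow : u ^ ((k : ℝ) + 1) = u ^ (k + 1) := by exact_mod_cast rpow_natCast u (k + 1)
      simp only [F, rpow_add hu.1 ((k : ℝ) + 1) s, hpow]
      ring
  have hint (k : ℕ) : IntegrableOn (F k) (Ioo 0 1) :=
    IntegrableOn.congr_fun ((integrableOn_rpow_mul_one_sub (hb k)).div_const _) (hF k).symm
      measurableSet_Ioo
  have hval (k : ℕ) :
      ∫ u in Ioo (0 : ℝ) 1, F k u = 1 / (((k : ℝ) + 1) * (k + s + 2) * (k + s + 3)) := by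
    rw [setIntegral_congr_fun measurableSet_Ioo (hF k), integral_div,
      integral_Ioo_zero_one_rpow_mul_one_sub (hb k), div_div]
    congr 1
    ring
  have hnorm (k : ℕ) : ∫ u in Ioo (0 : ℝ) 1, ‖F k u‖ = ∫ u in Ioo (0 : ℝ) 1, F k u :=
    setIntegral_congr_fun measurableSet_Ioo fun u ⟨hu0, hu1⟩ => norm_of_nonneg <|
      mul_nonneg (by positivity) (mul_nonneg (by positivity) (by linarith))
  have htsum : EqOn (fun u => ∑' k, F k u) (fun u => -log (1 - u) * (u ^ s * (1 - u)))
      (Ioo 0 1) := fun u hu =>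
    ((hasSum_pow_div_log_of_abs_lt_one (by rw [abs_of_pos hu.1]; exact hu.2)).mul_right _).tsum_eq
  have := hasSum_integral_of_summable_integral_norm hint
    (by simpa only [hnorm, hval] using summable_one_div_succ_mul_add_two_mul_add_three hs)
  rwa [funext hval, setIntegral_congr_fun measurableSet_Ioo htsum] at this

/-- Kendall's tau of the Joe copula:
`1 − 4 ∫_0^∞ t (ψ′(t))² dt = 1 − 4 ∑_{k=1}^∞ 1/(k(θk+2)(θ(k−1)+2))` for
`ψ(t) = 1 − (1−e^{−t})^{1/θ}`, the series being convergent. -/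
theorem stmt_18 (θ : ℝ) (hθ : 1 ≤ θ) :
    Summable (fun k : ℕ =>
      1 / (((k : ℝ) + 1) * (θ * ((k : ℝ) + 1) + 2) * (θ * (k : ℝ) + 2))) ∧
    1 - 4 * ∫ t in Set.Ioi (0:ℝ),
        t * (deriv (fun s => 1 - (1 - Real.exp (-s)) ^ (1/θ)) t) ^ 2
      = 1 - 4 * ∑' k : ℕ,
          1 / (((k : ℝ) + 1) * (θ * ((k : ℝ) + 1) + 2) * (θ * (k : ℝ) + 2)) := by
  have hθ0 : 0 < θ := by linarith
  have hs : -2 < 2 * (1 / θ) - 2 := by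
    have : 0 < 1 / θ := by positivity
    linarith
  have hterm (k : ℕ) : (1 / θ) ^ 2 * (1 / (((k : ℝ) + 1) * (k + (2 * (1 / θ) - 2) + 2)
      * (k + (2 * (1 / θ) - 2) + 3)))
      = 1 / (((k : ℝ) + 1) * (θ * ((k : ℝ) + 1) + 2) * (θ * (k : ℝ) + 2)) := by
    rw [show (k : ℝ) + (2 * (1 / θ) - 2) + 2 = (θ * k + 2) / θ by field_simp; ring,
      show (k : ℝ) + (2 * (1 / θ) - 2) + 3 = (θ * (k + 1) + 2) / θ by field_simp; ring]
    field_simp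
  have hsum := (hasSum_integral_neg_log_one_sub_mul hs).mul_left ((1 / θ) ^ 2)
  rw [← integral_mul_deriv_one_sub_one_sub_exp_neg_rpow_sq, funext hterm] at hsum
  exact ⟨hsum.summable, by rw [hsum.tsum_eq]⟩
end
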